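/- Let X ⊆ ℝ^d be compact with H^{d-1}(∂X) < ∞, ρ a PSF, β ∈ (0,1). Then the thresholded volume tensor estimator is asymptotically unbiased: for every r ≥ 0 and every tuple of vectors, lim_{a→0} (1/r!) ∫_{ℝ^d} z^r 𝟙_{{θ_a^X(z) ≥ β}} dz = (1/r!) ∫_X z^r dz, where z^r denotes the r-fold symmetric tensor power (equivalently, the limit holds for each polynomial coordinate z ↦ ∏_{k=1}^r ⟨z, v_{i_k}⟩). -/

import Mathlib

/-!
Substituting `w = y + a • u` gives `θ_a^X(y) = ∫ 𝟙_X(y + a • u) ρ(u) du`, which by dominated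
convergence tends to `𝟙_X(y)` wherever `𝟙_X` is continuous, i.e. off `∂X`. As `0 < β < 1`, the
thresholded indicator `𝟙_{θ_a^X ≥ β}` then converges to `𝟙_X` off `∂X`, a Lebesgue-null set since
its `(d-1)`-dimensional Hausdorff measure is finite. For small `a` the sets `{θ_a^X ≥ β}` stay in a
fixed ball, because the mass of `ρ` outside `B(0, 1/a)` tends to `0`; so dominated convergence
applies to the polynomial weight as well.
-/

open MeasureTheory Metric RealInnerProductSpace

open Filter Topology Set Module

theorem volume_eq_zero_of_hausdorffMeasure_ne_top {d : ℕ} {m : ℝ} (hm : m < d)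
    {s : Set (EuclideanSpace ℝ (Fin d))} (hs : μH[m] s ≠ ⊤) : volume s = 0 :=
  Measure.absolutelyContinuous_isAddHaarMeasure volume μH[(d : ℝ)]
    ((Measure.hausdorffMeasure_zero_or_top hm s).resolve_right hs)

section ApproximateIdentity

variable {E : Type*} [NormedAddCommGroup E] [NormedSpace ℝ E] [MeasurableSpace E] [BorelSpace E]
  {μ : Measure E}

theorem tendsto_integral_comp_add_smul_mul {f ρ : E → ℝ} {z : E} {C : ℝ} (hf : Measurable f)
    (hfC : ∀ x, ‖f x‖ ≤ C) (hfz : ContinuousAt f z) (hρ : Integrable ρ μ) :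
    Tendsto (fun a : ℝ => ∫ u, f (z + a • u) * ρ u ∂μ) (𝓝 0) (𝓝 (f z * ∫ u, ρ u ∂μ)) := by
  rw [← integral_const_mul]
  refine tendsto_integral_filter_of_dominated_convergence (fun u => C * ‖ρ u‖)
    (Eventually.of_forall fun a => ?_) (Eventually.of_forall fun a => ?_) (hρ.norm.const_mul C)
    (Eventually.of_forall fun u => ?_)
  · exact (hf.comp ((measurable_const_smul a).const_add z)).aestronglyMeasurable.mul
      hρ.aestronglyMeasurable
  · exact Eventually.of_forall fun u => by
      rw [norm_mul]; exact mul_le_mul_of_nonneg_right (hfC _) (norm_nonneg _)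
  · have hzu : Tendsto (fun a : ℝ => z + a • u) (𝓝 0) (𝓝 z) :=
      (show Continuous fun a : ℝ => z + a • u by fun_prop).tendsto' 0 z (by simp)
    exact ((hfz.tendsto.comp hzu).mul_const (ρ u))

end ApproximateIdentity

section BlurredImage

variable {E : Type*} [NormedAddCommGroup E] [NormedSpace ℝ E] [MeasurableSpace E] [BorelSpace E]
  [FiniteDimensional ℝ E]

/-- The image `θ_a^X` of `X` blurred by the point spread function `ρ` at scale `a`. -/
noncomputable def blurredImage (μ : Measure E) (ρ : E → ℝ) (X : Set E) (a : ℝ) (y : E) : ℝ :=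
  (a ^ finrank ℝ E)⁻¹ * ∫ w in X, ρ (a⁻¹ • (w - y)) ∂μ

variable {μ : Measure E} {ρ : E → ℝ} {X : Set E}

theorem measurable_blurredImage [SFinite μ] (hρ : Measurable ρ) (X : Set E) (a : ℝ) :
    Measurable (blurredImage μ ρ X a) := by
  have h : StronglyMeasurable fun q : E × E => ρ (a⁻¹ • (q.2 - q.1)) :=
    (hρ.comp (by fun_prop)).stronglyMeasurable
  exact (h.integral_prod_right' (ν := μ.restrict X)).measurable.const_mul _

variable [μ.IsAddHaarMeasure]

theorem blurredImage_eq_integral (hX : MeasurableSet X) {a : ℝ} (ha : 0 < a) (y : E) :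
    blurredImage μ ρ X a y = ∫ u, X.indicator (fun _ => (1 : ℝ)) (y + a • u) * ρ u ∂μ := by
  set h : E → ℝ := fun w => X.indicator (fun _ => 1) (y + w) * ρ (a⁻¹ • w)
  have htranslate : ∫ w in X, ρ (a⁻¹ • (w - y)) ∂μ = ∫ w, h w ∂μ := by
    rw [← integral_add_left_eq_self h (-y), ← integral_indicator hX]
    congr 1; ext w
    by_cases hw : w ∈ X <;> simp [h, hw, neg_add_eq_sub]
  have hscale : ∫ u, h (a • u) ∂μ = (a ^ finrank ℝ E)⁻¹ * ∫ w, h w ∂μ :=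
    Measure.integral_comp_smul_of_nonneg μ h a (hR := ha.le)
  rw [blurredImage, htranslate, ← hscale]
  congr 1; ext u
  simp [h, smul_smul, inv_mul_cancel₀ ha.ne']

theorem tendsto_blurredImage (hX : MeasurableSet X) (hρ : Integrable ρ μ) {z : E}
    (hz : z ∉ frontier X) :
    Tendsto (fun a => blurredImage μ ρ X a z) (𝓝[>] 0)
      (𝓝 (X.indicator (fun _ => 1) z * ∫ u, ρ u ∂μ)) := by
  have hbound : ∀ x, ‖X.indicator (fun _ => (1 : ℝ)) x‖ ≤ 1 := fun x =>
    (norm_indicator_le_norm_self _ x).trans_eq norm_one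
  refine ((tendsto_integral_comp_add_smul_mul (measurable_const.indicator hX) hbound
    (continuousOn_const.continuousAt_indicator hz) hρ).mono_left nhdsWithin_le_nhds).congr' ?_
  filter_upwards [self_mem_nhdsWithin] with a ha using (blurredImage_eq_integral hX ha z).symm

theorem eventually_setOf_le_blurredImage_subset (hX : MeasurableSet X) (hρ0 : ∀ u, 0 ≤ ρ u)
    (hρ : Integrable ρ μ) {M β : ℝ} (hXM : X ⊆ closedBall 0 M) (hβ : 0 < β) :
    ∀ᶠ a in 𝓝[>] 0, {y | β ≤ blurredImage μ ρ X a y} ⊆ closedBall 0 (M + 1) := by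
  set B := (ball (0 : E) 1)ᶜ
  have hB0 : (0 : E) ∉ frontier B := by
    rw [frontier_compl]
    exact fun h => h.2 (by rw [isOpen_ball.interior_eq]; exact mem_ball_self one_pos)
  have hbound : ∀ x, ‖B.indicator (fun _ => (1 : ℝ)) x‖ ≤ 1 := fun x =>
    (norm_indicator_le_norm_self _ x).trans_eq norm_one
  have hBm : Measurable (B.indicator fun _ => (1 : ℝ)) :=
    measurable_const.indicator measurableSet_ball.compl
  have htail :
      Tendsto (fun a : ℝ => ∫ u, B.indicator (fun _ => 1) (a • u) * ρ u ∂μ) (𝓝 0) (𝓝 0) := by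
    simpa [B] using tendsto_integral_comp_add_smul_mul hBm hbound
      (continuousOn_const.continuousAt_indicator hB0) hρ
  filter_upwards [self_mem_nhdsWithin, (htail.mono_left nhdsWithin_le_nhds).eventually_lt_const hβ]
    with a ha htail_lt y hy
  by_contra hyM
  refine (lt_of_le_of_lt ?_ htail_lt).not_ge hy
  rw [blurredImage_eq_integral hX ha]
  refine integral_mono_of_nonneg (Eventually.of_forall fun u => ?_)
    (hρ.bdd_mul (hBm.comp (measurable_const_smul a)).aestronglyMeasurable
      (Eventually.of_forall fun u => hbound _)) (Eventually.of_forall fun u => ?_)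
  · by_cases hu : y + a • u ∈ X <;> simp [hu, hρ0 u]
  · dsimp only
    by_cases hu : y + a • u ∈ X
    · have hau : a • u ∈ B := by
        have := hXM hu
        simp only [B, mem_compl_iff, mem_ball_zero_iff, not_lt, mem_closedBall_zero_iff]
          at this hyM ⊢
        linarith [show ‖y‖ ≤ ‖y + a • u‖ + ‖a • u‖ by
          simpa using norm_sub_le (y + a • u) (a • u)]
      simp [hu, hau]
    · rw [indicator_of_notMem hu, zero_mul]
      exact mul_nonneg (indicator_nonneg (fun _ _ => zero_le_one) _) (hρ0 u)

theorem tendsto_indicator_setOf_le_blurredImage (hX : MeasurableSet X) (hρ : Integrable ρ μ)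
    (hρ1 : ∫ u, ρ u ∂μ = 1) {β : ℝ} (hβ : β ∈ Ioo (0 : ℝ) 1) {z : E} (hz : z ∉ frontier X) :
    Tendsto (fun a => {y | β ≤ blurredImage μ ρ X a y}.indicator (fun _ => (1 : ℝ)) z) (𝓝[>] 0)
      (𝓝 (X.indicator (fun _ => 1) z)) := by
  have hθ := tendsto_blurredImage hX hρ hz
  rw [hρ1, mul_one] at hθ
  set S := fun a => {y | β ≤ blurredImage μ ρ X a y}
  by_cases hzX : z ∈ X
  · rw [indicator_of_mem hzX (fun _ => (1 : ℝ))] at hθ ⊢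
    refine tendsto_const_nhds.congr' ?_
    filter_upwards [hθ.eventually_const_lt hβ.2] with a ha
    exact (indicator_of_mem (show z ∈ S a from ha.le) (fun _ => (1 : ℝ))).symm
  · rw [indicator_of_notMem hzX (fun _ => (1 : ℝ))] at hθ ⊢
    refine tendsto_const_nhds.congr' ?_
    filter_upwards [hθ.eventually_lt_const hβ.1] with a ha
    exact (indicator_of_notMem (show z ∉ S a from not_le.2 ha) (fun _ => (1 : ℝ))).symm

end BlurredImage

theorem tendsto_integral_mul_indicator_of_ae_tendsto {α ι : Type*} [MeasurableSpace α]
    {μ : Measure α} {l : Filter ι} [l.IsCountablyGenerated] {S : ι → Set α} {K X : Set α}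
    {p : α → ℝ} (hS : ∀ i, MeasurableSet (S i)) (hK : MeasurableSet K) (hX : MeasurableSet X)
    (hSK : ∀ᶠ i in l, S i ⊆ K) (hp : AEStronglyMeasurable p μ) (hpK : IntegrableOn p K μ)
    (hlim : ∀ᵐ z ∂μ,
      Tendsto (fun i => (S i).indicator (fun _ => (1 : ℝ)) z) l (𝓝 (X.indicator (fun _ => 1) z))) :
    Tendsto (fun i => ∫ z, p z * (S i).indicator (fun _ => 1) z ∂μ) l (𝓝 (∫ z in X, p z ∂μ)) := by
  have hX' : ∫ z in X, p z ∂μ = ∫ z, p z * X.indicator (fun _ => 1) z ∂μ := by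
    rw [← integral_indicator hX]
    congr 1; ext z
    by_cases hz : z ∈ X <;> simp [hz]
  rw [hX']
  refine tendsto_integral_filter_of_dominated_convergence (K.indicator fun z => ‖p z‖)
    (Eventually.of_forall fun i =>
      hp.mul (measurable_const.indicator (hS i)).aestronglyMeasurable) ?_
    (IntegrableOn.integrable_indicator hpK.norm hK) (hlim.mono fun z hz => hz.const_mul (p z))
  filter_upwards [hSK] with i hi
  refine Eventually.of_forall fun z => ?_
  by_cases hz : z ∈ S i
  · simp [hz, hi hz]
  · simp [hz, indicator_nonneg]

/-- Asymptotic unbiasedness of the thresholded volume tensor estimator: each polynomial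
coordinate of the rank-r volume tensor is recovered in the limit a → 0. -/
theorem volume_tensor_estimator_unbiased (d : ℕ) (ρ : EuclideanSpace ℝ (Fin d) → ℝ)
    (hρm : Measurable ρ) (hρ0 : ∀ z, 0 ≤ ρ z) (hρ1 : ∫ z, ρ z = 1)
    (X : Set (EuclideanSpace ℝ (Fin d))) (hXc : IsCompact X)
    (hXb : μH[(d : ℝ) - 1] (frontier X) < ⊤)
    (β : ℝ) (hβ : β ∈ Set.Ioo (0 : ℝ) 1)
    (r : ℕ) (v : Fin r → EuclideanSpace ℝ (Fin d)) :
    Filter.Tendsto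
      (fun a : ℝ =>
        (r.factorial : ℝ)⁻¹ *
          ∫ z, (∏ k : Fin r, ⟪z, v k⟫) *
            Set.indicator {y | β ≤ (a ^ d)⁻¹ * ∫ w in X, ρ (a⁻¹ • (w - y))}
              (fun _ => (1 : ℝ)) z)
      (nhdsWithin 0 (Set.Ioi 0))
      (nhds ((r.factorial : ℝ)⁻¹ * ∫ z in X, ∏ k : Fin r, ⟪z, v k⟫)) := by
  have hX : MeasurableSet X := hXc.isClosed.measurableSet
  have hρ : Integrable ρ := Integrable.of_integral_ne_zero (by rw [hρ1]; exact one_ne_zero)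
  have hp : Continuous fun z : EuclideanSpace ℝ (Fin d) => ∏ k : Fin r, ⟪z, v k⟫ := by fun_prop
  have hfrontier : volume (frontier X) = 0 :=
    volume_eq_zero_of_hausdorffMeasure_ne_top (by linarith) hXb.ne
  obtain ⟨M, hM⟩ := hXc.isBounded.subset_closedBall 0
  have hθ : ∀ a : ℝ, {y | β ≤ (a ^ d)⁻¹ * ∫ w in X, ρ (a⁻¹ • (w - y))} =
      {y | β ≤ blurredImage volume ρ X a y} := by
    simp [blurredImage]
  simp_rw [hθ]
  refine Tendsto.const_mul _ (tendsto_integral_mul_indicator_of_ae_tendsto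
    (fun a => measurableSet_le measurable_const (measurable_blurredImage hρm X a))
    measurableSet_closedBall hX (eventually_setOf_le_blurredImage_subset hX hρ0 hρ hM hβ.1)
    hp.aestronglyMeasurable (hp.continuousOn.integrableOn_compact (isCompact_closedBall _ _)) ?_)
  filter_upwards [measure_eq_zero_iff_ae_notMem.mp hfrontier] with z hz
  exact tendsto_indicator_setOf_le_blurredImage hX hρ hρ1 hβ hz
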